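/- Let H be a concept class over X with VCdim(H) ≤ 1 and suppose distinct points of X are separated by H and no point is labeled constantly by H. For any x₁, x₂ ∈ X, if there exists h ∈ H with x₁, x₂ ∈ h_f (i.e., h disagrees with f ∈ H at both points), then x₁ and x₂ are comparable in the order ≤ defined by x ≤ y iff every h ∈ H disagreeing with f at y also disagrees with f at x. -/

import Mathlib

/-!
If `x₁` and `x₂` were incomparable, some `h ∈ H` would disagree with `f` at `x₂` but not at
`x₁`, and another at `x₁` but not at `x₂`. Together with `f` itself and the hypothesis `h`
disagreeing with `f` at both points, these realise all four disagreement patterns on `{x₁, x₂}`.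
Since a Boolean label is determined by whether it agrees with `f`, that shatters `{x₁, x₂}`,
contradicting `VCdim H ≤ 1`.
-/

def FnShatters {X : Type*} (H : Set (X → Bool)) (A : Set X) : Prop :=
  ∀ g : X → Bool, ∃ h ∈ H, ∀ a ∈ A, h a = g a

theorem Bool.eq_of_eq_iff_eq {a b c : Bool} (h : a = c ↔ b = c) : a = b := by
  cases a <;> cases b <;> cases c <;> simp_all

theorem fnShatters_pair_of_disagreements {X : Type*} {H : Set (X → Bool)} {f : X → Bool}
    (hf : f ∈ H) {x y : X}
    (hboth : ∃ h ∈ H, h x ≠ f x ∧ h y ≠ f y)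
    (hleft : ∃ h ∈ H, h x ≠ f x ∧ h y = f y)
    (hright : ∃ h ∈ H, h x = f x ∧ h y ≠ f y) :
    FnShatters H {x, y} := by
  suffices key : ∀ g : X → Bool, ∃ h ∈ H, (h x = f x ↔ g x = f x) ∧ (h y = f y ↔ g y = f y) by
    intro g
    obtain ⟨h, hH, hx, hy⟩ := key g
    exact ⟨h, hH, by rintro a (rfl | rfl) <;> apply Bool.eq_of_eq_iff_eq <;> assumption⟩
  intro g
  by_cases gx : g x = f x <;> by_cases gy : g y = f y
  · exact ⟨f, hf, by simp [gx, gy]⟩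
  · obtain ⟨h, hH, hx, hy⟩ := hright
    exact ⟨h, hH, by simp [gx, gy, hx, hy]⟩
  · obtain ⟨h, hH, hx, hy⟩ := hleft
    exact ⟨h, hH, by simp [gx, gy, hx, hy]⟩
  · obtain ⟨h, hH, hx, hy⟩ := hboth
    exact ⟨h, hH, by simp [gx, gy, hx, hy]⟩

theorem stmt_16_general {X : Type*} (H : Set (X → Bool)) (f : X → Bool) (hf : f ∈ H)
    (hvc : ∀ x y : X, x ≠ y → ¬ FnShatters H {x, y})
    (le : X → X → Prop)
    (hle : ∀ x y, le x y ↔ ∀ h ∈ H, h y ≠ f y → h x ≠ f x)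
    (x₁ x₂ : X) (hx : ∃ h ∈ H, h x₁ ≠ f x₁ ∧ h x₂ ≠ f x₂) :
    le x₁ x₂ ∨ le x₂ x₁ := by
  by_cases hxy : x₁ = x₂
  · exact Or.inl ((hle x₁ x₂).2 fun h _ hh => hxy ▸ hh)
  by_contra! hinc
  simp only [hle, not_forall, not_not, exists_prop] at hinc
  obtain ⟨⟨h₂, h₂H, h₂x₂, h₂x₁⟩, ⟨h₁, h₁H, h₁x₁, h₁x₂⟩⟩ := hinc
  exact hvc x₁ x₂ hxy <|
    fnShatters_pair_of_disagreements hf hx ⟨h₁, h₁H, h₁x₁, h₁x₂⟩ ⟨h₂, h₂H, h₂x₁, h₂x₂⟩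

/-- If `VCdim H ≤ 1`, `H` separates points and no point is labeled constantly, then any
two points at which some `h ∈ H` simultaneously disagrees with `f` are comparable in
the order `x ≤ y ↔ ∀ h ∈ H, h y ≠ f y → h x ≠ f x`. -/
theorem stmt_16 {X : Type*} (H : Set (X → Bool)) (f : X → Bool) (hf : f ∈ H)
    (hvc : ∀ x y : X, x ≠ y → ¬ FnShatters H {x, y})
    (hsep : ∀ x y : X, x ≠ y → ∃ h ∈ H, h x ≠ h y)
    (hnc : ∀ x : X, ∃ h ∈ H, h x ≠ f x)
    (le : X → X → Prop)
    (hle : ∀ x y, le x y ↔ ∀ h ∈ H, h y ≠ f y → h x ≠ f x)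
    (x₁ x₂ : X) (hx : ∃ h ∈ H, h x₁ ≠ f x₁ ∧ h x₂ ≠ f x₂) :
    le x₁ x₂ ∨ le x₂ x₁ :=
  stmt_16_general H f hf hvc le hle x₁ x₂ hx
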